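/- Let n ≥ 2, let A be a nontrivial subgroup of the free group F_n, and let z ∈ F_n be a nontrivial element such that A and the cyclic subgroup ⟨z⟩ form a free splitting F_n = A * ⟨z⟩. Then the map f ↦ f|_A (restriction to A) is a group isomorphism from the subgroup {f ∈ Aut(F_n) : f(A) = A and f(z) = z} of Aut(F_n) onto the automorphism group Aut(A) of A. In particular, the subgroup of Aut(F_n) of all automorphisms preserving the free splitting F_n = ⟨z⟩ * A and fixing z is isomorphic to Aut(F_{n−1}). -/

import Mathlib

/-!
An automorphism `u` of `A` extends to the automorphism `u ∗ id` of `A ∗ ⟨z⟩ ≅ F_n`, which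
preserves `A` and fixes `z`; this inverts restriction, because an automorphism that is the
identity on both free factors is the identity. For the rank, `⟨z⟩` is infinite cyclic since
free groups are torsion-free, `A` is free on some `S` by Nielsen–Schreier, and then
`F_n ≅ F(S) ∗ F(1) ≅ F(S ⊕ 1)`, so `|S| = n - 1` by invariance of rank.
-/

/-- Word metric w.r.t. a generating set `S`: `wordDist S x y` is the least `k` such that
`x⁻¹ * y` is a product of `k` elements of `S ∪ S⁻¹`. -/
noncomputable def wordDist {G : Type*} [Group G] (S : Set G) (x y : G) : ℕ :=
  sInf {k | ∃ l : List G, l.length = k ∧ (∀ z ∈ l, z ∈ S ∨ z⁻¹ ∈ S) ∧ l.prod = x⁻¹ * y}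

/-- Subgroups `A, B` of `G` form a free splitting `G = A * B` if the induced homomorphism
from the free product `A ∗ B` to `G` is an isomorphism. -/
def IsFreeSplitting {G : Type*} [Group G] (A B : Subgroup G) : Prop :=
  Function.Bijective (Monoid.Coprod.lift A.subtype B.subtype)

open Monoid Subgroup

def FreeGroup.coprodEquivSum (α β : Type*) :
    Coprod (FreeGroup α) (FreeGroup β) ≃* FreeGroup (α ⊕ β) :=
  MonoidHom.toMulEquiv
    (Coprod.lift (FreeGroup.map Sum.inl) (FreeGroup.map Sum.inr))
    (FreeGroup.lift (Sum.elim (Coprod.inl ∘ FreeGroup.of) (Coprod.inr ∘ FreeGroup.of)))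
    (by ext <;> simp)
    (by ext (_ | _) <;> simp)

noncomputable def zpowersEquivFreeGroupUnit {G : Type*} [Group G] [IsMulTorsionFree G]
    {z : G} (hz : z ≠ 1) : zpowers z ≃* FreeGroup Unit :=
  have hinj : Function.Injective (zpowersHom G z) :=
    injective_zpow_iff_not_isOfFinOrder.mpr (not_isOfFinOrder_of_isMulTorsionFree hz)
  (MonoidHom.ofInjective hinj).symm.trans FreeGroup.mulEquivIntOfUnique.symm

lemma MulAut.forall_mem_zpowers_apply_eq_iff {G : Type*} [Group G] (f : MulAut G) (z : G) :
    (∀ b ∈ zpowers z, f b = b) ↔ f z = z :=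
  zpowers_le (H := MonoidHom.eqLocus f.toMonoidHom (MonoidHom.id G))

section restrict

variable {G : Type*} [Group G] (A : Subgroup G) (H : Subgroup (MulAut G))
  (hH : ∀ f ∈ H, A.map f.toMonoidHom = A)

def MulAut.restrict : H →* MulAut A where
  toFun f := (f.1.subgroupMap A).trans (MulEquiv.subgroupCongr (hH f f.2))
  map_one' := rfl
  map_mul' _ _ := rfl

@[simp] lemma MulAut.restrict_apply_coe (f : H) (a : A) :
    (MulAut.restrict A H hH f a : G) = f.1 a :=
  rfl

end restrict

namespace IsFreeSplitting

variable {G : Type*} [Group G] {A B : Subgroup G} (h : IsFreeSplitting A B)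
include h

noncomputable def coprodEquiv : Coprod A B ≃* G := MulEquiv.ofBijective _ h

@[simp] lemma coprodEquiv_inl (a : A) : h.coprodEquiv (Coprod.inl a) = a :=
  Coprod.lift_apply_inl A.subtype B.subtype a

@[simp] lemma coprodEquiv_inr (b : B) : h.coprodEquiv (Coprod.inr b) = b :=
  Coprod.lift_apply_inr A.subtype B.subtype b

@[simp] lemma coprodEquiv_symm_apply_left (a : A) : h.coprodEquiv.symm a = Coprod.inl a :=
  h.coprodEquiv.symm_apply_eq.mpr (h.coprodEquiv_inl a).symm

@[simp] lemma coprodEquiv_symm_apply_right (b : B) : h.coprodEquiv.symm b = Coprod.inr b :=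
  h.coprodEquiv.symm_apply_eq.mpr (h.coprodEquiv_inr b).symm

lemma hom_ext {M : Type*} [Monoid M] {f g : G →* M} (hA : ∀ a ∈ A, f a = g a)
    (hB : ∀ b ∈ B, f b = g b) : f = g :=
  (MonoidHom.cancel_right h.2).1 <|
    Coprod.hom_ext (MonoidHom.ext fun a => hA a a.2) (MonoidHom.ext fun b => hB b b.2)

noncomputable def extendAut (u : MulAut A) : MulAut G :=
  h.coprodEquiv.symm.trans ((MulEquiv.coprodCongr u (MulEquiv.refl B)).trans h.coprodEquiv)

@[simp] lemma extendAut_apply_left (u : MulAut A) (a : A) : h.extendAut u a = u a := by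
  simp [extendAut]

@[simp] lemma extendAut_apply_right (u : MulAut A) (b : B) : h.extendAut u b = b := by
  simp [extendAut]

lemma map_extendAut (u : MulAut A) : A.map (h.extendAut u).toMonoidHom = A := by
  apply le_antisymm
  · rintro _ ⟨a, ha, rfl⟩
    exact (h.extendAut_apply_left u ⟨a, ha⟩).symm ▸ (u ⟨a, ha⟩).2
  · intro a ha
    refine ⟨u.symm ⟨a, ha⟩, (u.symm ⟨a, ha⟩).2, ?_⟩
    simp

theorem bijective_restrict (H : Subgroup (MulAut G))
    (hH : ∀ f, f ∈ H ↔ A.map f.toMonoidHom = A ∧ ∀ b ∈ B, f b = b) :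
    Function.Bijective (MulAut.restrict A H fun f hf => ((hH f).1 hf).1) := by
  constructor
  · intro f g hfg
    have hA : ∀ a ∈ A, f.1 a = g.1 a := fun a ha => by
      simpa using congrArg Subtype.val (DFunLike.congr_fun hfg ⟨a, ha⟩)
    have hB : ∀ b ∈ B, f.1 b = g.1 b := fun b hb => by
      rw [((hH _).1 f.2).2 b hb, ((hH _).1 g.2).2 b hb]
    exact Subtype.ext (MulEquiv.toMonoidHom_injective (h.hom_ext hA hB))
  · intro u
    have hmem : h.extendAut u ∈ H :=
      (hH _).2 ⟨h.map_extendAut u, fun b hb => h.extendAut_apply_right u ⟨b, hb⟩⟩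
    exact ⟨⟨_, hmem⟩, MulEquiv.ext fun a => Subtype.ext (h.extendAut_apply_left u a)⟩

end IsFreeSplitting

noncomputable def IsFreeSplitting.equivSum {α β γ : Type*} {A B : Subgroup (FreeGroup α)}
    (h : IsFreeSplitting A B) (eA : A ≃* FreeGroup β) (eB : B ≃* FreeGroup γ) :
    α ≃ β ⊕ γ :=
  Equiv.ofFreeGroupEquiv <| h.coprodEquiv.symm.trans <|
    (MulEquiv.coprodCongr eA eB).trans (FreeGroup.coprodEquivSum β γ)

theorem IsFreeSplitting.nonempty_mulEquiv_freeGroup_fin_pred {n : ℕ}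
    {A : Subgroup (FreeGroup (Fin n))} {z : FreeGroup (Fin n)}
    (h : IsFreeSplitting A (zpowers z)) (hz : z ≠ 1) :
    Nonempty (A ≃* FreeGroup (Fin (n - 1))) := by
  let eA := IsFreeGroup.toFreeGroup A
  let e := h.equivSum eA (zpowersEquivFreeGroupUnit hz)
  have : Finite (IsFreeGroup.Generators A ⊕ Unit) := .of_equiv _ e
  have : Finite (IsFreeGroup.Generators A) := .sum_left Unit
  have hcard : Nat.card (IsFreeGroup.Generators A) = n - 1 := by
    have := Nat.card_congr e
    simp only [Nat.card_sum, Nat.card_unique, Nat.card_eq_fintype_card, Fintype.card_fin] at this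
    omega
  exact ⟨eA.trans (FreeGroup.freeGroupCongr (Finite.equivFinOfCardEq hcard))⟩

theorem restriction_iso_of_splitting_stabilizer_fixing_z_general
    (n : ℕ)
    (A : Subgroup (FreeGroup (Fin n)))
    (z : FreeGroup (Fin n)) (hz : z ≠ 1)
    (hAz : IsFreeSplitting A (Subgroup.zpowers z))
    (H : Subgroup (MulAut (FreeGroup (Fin n))))
    (hH : ∀ f : MulAut (FreeGroup (Fin n)), f ∈ H ↔
      A.map f.toMonoidHom = A ∧ f z = z) :
    (∃ e : H ≃* MulAut A, ∀ (f : H) (a : A),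
        ((e f a : A) : FreeGroup (Fin n)) =
          (f : MulAut (FreeGroup (Fin n))) (a : FreeGroup (Fin n))) ∧
    Nonempty (H ≃* MulAut (FreeGroup (Fin (n - 1)))) := by
  have hH' : ∀ f, f ∈ H ↔ A.map f.toMonoidHom = A ∧ ∀ b ∈ zpowers z, f b = b := by
    simpa only [MulAut.forall_mem_zpowers_apply_eq_iff] using hH
  let e : H ≃* MulAut A := MulEquiv.ofBijective _ (hAz.bijective_restrict H hH')
  obtain ⟨eA⟩ := hAz.nonempty_mulEquiv_freeGroup_fin_pred hz
  exact ⟨⟨e, fun _ _ => rfl⟩, ⟨e.trans (MulAut.congr eA)⟩⟩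

/-- Given a free splitting `F_n = A * ⟨z⟩`, restriction to `A` is a group isomorphism
from the subgroup of `Aut(F_n)` of automorphisms preserving `A` and fixing `z` onto
`Aut(A)`; in particular this subgroup is isomorphic to `Aut(F_{n-1})`. -/
theorem restriction_iso_of_splitting_stabilizer_fixing_z
    (n : ℕ) (hn : 2 ≤ n)
    (A : Subgroup (FreeGroup (Fin n))) (hA : A ≠ ⊥)
    (z : FreeGroup (Fin n)) (hz : z ≠ 1)
    (hAz : IsFreeSplitting A (Subgroup.zpowers z))
    (H : Subgroup (MulAut (FreeGroup (Fin n))))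
    (hH : ∀ f : MulAut (FreeGroup (Fin n)), f ∈ H ↔
      A.map f.toMonoidHom = A ∧ f z = z) :
    (∃ e : H ≃* MulAut A, ∀ (f : H) (a : A),
        ((e f a : A) : FreeGroup (Fin n)) =
          (f : MulAut (FreeGroup (Fin n))) (a : FreeGroup (Fin n))) ∧
    Nonempty (H ≃* MulAut (FreeGroup (Fin (n - 1)))) :=
  restriction_iso_of_splitting_stabilizer_fixing_z_general n A z hz hAz H hH
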